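/- arXiv:2504.11713 — 2 statements merged into one kernel-verified Lean document; each statement's English description precedes it below -/
import Mathlib

section
/- Let p_t, p_{t|s}, p_{s|t} be the marginals and transitions of a Markov process on ℝ, with p_{s|t}(x|y) = p_s(x)p_{t|s}(y|x)/p_t(y). Define the wrapped process on the circle 𝕋 = ℝ/ℤ with wrapped marginals p̄_t(x) = Σ_k p_t(x+k). Then the wrapped backward transition density satisfies p̄_{s|t}(x | y) = Σ_{k ∈ ℤ} ( Σ_{k' ∈ ℤ} p_{s|t}(x + k' | y + k) ) · p_t(y + k) / Σ_{k'' ∈ ℤ} p_t(y + k''), and this is a probability density in x on [0,1). -/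
open MeasureTheory
open scoped ENNReal

/-- Wrapped backward transitions on the circle. Here `ps, pt` are the time-`s` and time-`t`
marginals, `pts x y = p_{t|s}(y|x)` is the forward transition, and
`psit x y = p_{s|t}(x|y) = ps(x) pts(y|x) / pt(y)` the backward transition on `ℝ`.
The wrapped backward transition density (ratio of the wrapped joint to the wrapped marginal)
equals `Σ_k (Σ_{k'} p_{s|t}(x+k'|y+k)) p_t(y+k) / Σ_{k''} p_t(y+k'')`, and the latter is a
probability density in `x` on `[0,1)`. -/
theorem stmt7 (ps pt : ℝ → ℝ) (pts psit : ℝ → ℝ → ℝ)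
    (hps : ∀ x, 0 < ps x) (hpt : ∀ y, 0 < pt y) (hpts : ∀ x y, 0 < pts x y)
    (hdef : ∀ x y, psit x y = ps x * pts x y / pt y)
    (hint : ∀ y, Integrable (fun x => psit x y))
    (hnorm : ∀ y, ∫ x, psit x y = 1)
    (hsum : ∀ y, Summable (fun k : ℤ => pt (y + k))) :
    (∀ x y : ℝ,
      (∑' k : ℤ, ∑' k' : ℤ, ps (x + k') * pts (x + k') (y + k)) / (∑' k'' : ℤ, pt (y + k''))
        = ∑' k : ℤ, (∑' k' : ℤ, psit (x + k') (y + k)) * pt (y + k)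
            / (∑' k'' : ℤ, pt (y + k''))) ∧
    (∀ y : ℝ, ∫ x in Set.Ico (0 : ℝ) 1,
        (∑' k : ℤ, (∑' k' : ℤ, psit (x + k') (y + k)) * pt (y + k)
            / (∑' k'' : ℤ, pt (y + k''))) = 1) := by
  have hpsit : ∀ x z, 0 < psit x z := fun x z => by
    rw [hdef]; exact div_pos (mul_pos (hps x) (hpts x z)) (hpt z)
  have hnum : ∀ x y : ℝ, ∀ k : ℤ,
      (∑' k' : ℤ, ps (x + k') * pts (x + k') (y + k))
        = (∑' k' : ℤ, psit (x + k') (y + k)) * pt (y + k) := by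
    intro x y k
    rw [← tsum_mul_right]
    exact tsum_congr fun k' => by
      rw [hdef]; exact (div_mul_cancel₀ _ (hpt (y + k)).ne').symm
  constructor
  · intro x y
    simp_rw [hnum x y]
    rw [← tsum_div_const]
  · intro y
    set D : ℝ := ∑' k'' : ℤ, pt (y + k'') with hDdef
    have hD : 0 < D := (hpt (y + (0 : ℤ))).trans_le (Summable.le_tsum (hsum y) 0 fun k _ => (hpt _).le)
    -- measurability facts
    have meas : ∀ z : ℝ, AEMeasurable (fun x => ENNReal.ofReal (psit x z)) volume := fun z =>
      ENNReal.measurable_ofReal.comp_aemeasurable (hint z).aestronglyMeasurable.aemeasurable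
    have meas' : ∀ (z c : ℝ), AEMeasurable (fun x => ENNReal.ofReal (psit (x + c) z)) volume := by
      intro z c
      exact (meas z).comp_quasiMeasurePreserving
        (measurePreserving_add_right volume c).quasiMeasurePreserving
    -- total lintegral of the backward transition is 1
    have htot : ∀ z : ℝ, ∫⁻ x, ENNReal.ofReal (psit x z) = 1 := by
      intro z
      rw [← ofReal_integral_eq_lintegral_ofReal (hint z) (ae_of_all _ fun x => (hpsit x z).le),
        hnorm z, ENNReal.ofReal_one]
    -- shifting the domain of lintegral on a set
    have hshift : ∀ (f : ℝ → ℝ≥0∞) (c : ℝ),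
        (∫⁻ x in Set.Ico (0 : ℝ) 1, f (x + c)) = ∫⁻ x in Set.Ico c (c + 1), f x := by
      intro f c
      have h1 : (∫⁻ x in Set.Ico (0 : ℝ) 1, f (x + c))
          = ∫⁻ x, (Set.Ico c (c + 1)).indicator f (x + c) := by
        rw [← lintegral_indicator measurableSet_Ico]
        congr 1
        ext x
        by_cases hx : x ∈ Set.Ico (0 : ℝ) 1
        · have hx' : x + c ∈ Set.Ico c (c + 1) := by
            constructor
            · linarith [hx.1]
            · linarith [hx.2]
          rw [Set.indicator_of_mem hx, Set.indicator_of_mem hx']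
        · have hx' : x + c ∉ Set.Ico c (c + 1) := by
            intro h
            exact hx ⟨by linarith [h.1], by linarith [h.2]⟩
          rw [Set.indicator_of_notMem hx, Set.indicator_of_notMem hx']
      rw [h1, lintegral_add_right_eq_self, lintegral_indicator measurableSet_Ico]
    -- decomposition of ℝ into unit intervals
    have hdecomp : ∀ f : ℝ → ℝ≥0∞,
        (∑' k' : ℤ, ∫⁻ x in Set.Ico (k' : ℝ) ((k' : ℝ) + 1), f x) = ∫⁻ x, f x := by
      intro f
      rw [← lintegral_iUnion (fun k : ℤ => measurableSet_Ico)
        (Set.pairwise_disjoint_Ico_intCast ℝ) f, iUnion_Ico_intCast ℝ, Measure.restrict_univ]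
    -- the wrapped transition integrates to 1 (lintegral form)
    have L1 : ∀ k : ℤ,
        (∫⁻ x in Set.Ico (0 : ℝ) 1, ∑' k' : ℤ, ENNReal.ofReal (psit (x + (k' : ℤ)) (y + k))) = 1 := by
      intro k
      rw [lintegral_tsum fun k' : ℤ => ((meas' (y + k) (k' : ℝ)).restrict)]
      calc (∑' k' : ℤ, ∫⁻ x in Set.Ico (0 : ℝ) 1, ENNReal.ofReal (psit (x + (k' : ℤ)) (y + k)))
          = ∑' k' : ℤ, ∫⁻ x in Set.Ico (k' : ℝ) ((k' : ℝ) + 1),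
              ENNReal.ofReal (psit x (y + k)) := by
            exact tsum_congr fun k' => hshift (fun x => ENNReal.ofReal (psit x (y + k))) (k' : ℝ)
        _ = ∫⁻ x, ENNReal.ofReal (psit x (y + k)) := hdecomp _
        _ = 1 := htot _
    -- the ENNReal-valued integrand
    set T : ℝ → ℝ≥0∞ := fun x => ∑' k : ℤ,
      (∑' k' : ℤ, ENNReal.ofReal (psit (x + (k' : ℤ)) (y + k))) * ENNReal.ofReal (pt (y + k) / D)
      with hTdef
    have hTmeasK : ∀ k : ℤ, AEMeasurable (fun x =>
        (∑' k' : ℤ, ENNReal.ofReal (psit (x + (k' : ℤ)) (y + k))) * ENNReal.ofReal (pt (y + k) / D))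
        (volume.restrict (Set.Ico (0 : ℝ) 1)) := fun k =>
      ((AEMeasurable.ennreal_tsum fun k' : ℤ => (meas' (y + k) (k' : ℝ)).restrict).mul_const _)
    have hTmeas : AEMeasurable T (volume.restrict (Set.Ico (0 : ℝ) 1)) :=
      AEMeasurable.ennreal_tsum hTmeasK
    -- the lintegral of T over [0,1) is 1
    have hsumD : (∑' k : ℤ, ENNReal.ofReal (pt (y + k))) = ENNReal.ofReal D :=
      (ENNReal.ofReal_tsum_of_nonneg (fun k => (hpt _).le) (hsum y)).symm
    have L2 : (∫⁻ x in Set.Ico (0 : ℝ) 1, T x) = 1 := by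
      rw [hTdef, lintegral_tsum hTmeasK]
      have : ∀ k : ℤ, (∫⁻ x in Set.Ico (0 : ℝ) 1,
          (∑' k' : ℤ, ENNReal.ofReal (psit (x + (k' : ℤ)) (y + k))) * ENNReal.ofReal (pt (y + k) / D))
          = ENNReal.ofReal (pt (y + k)) / ENNReal.ofReal D := by
        intro k
        rw [lintegral_mul_const'' _ (AEMeasurable.ennreal_tsum fun k' : ℤ =>
          (meas' (y + k) (k' : ℝ)).restrict), L1 k, one_mul, ENNReal.ofReal_div_of_pos hD]
      simp_rw [this]
      simp_rw [div_eq_mul_inv]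
      rw [ENNReal.tsum_mul_right, hsumD, ← div_eq_mul_inv, ENNReal.div_self (by positivity) ENNReal.ofReal_ne_top]
    -- T is a.e. finite, hence the real sums converge a.e. and match T
    have hTfin : ∀ᵐ x ∂(volume.restrict (Set.Ico (0 : ℝ) 1)), T x < ∞ :=
      ae_lt_top' hTmeas (by rw [L2]; exact ENNReal.one_ne_top)
    have hae : ∀ᵐ x ∂(volume.restrict (Set.Ico (0 : ℝ) 1)),
        ENNReal.ofReal (∑' k : ℤ, (∑' k' : ℤ, psit (x + (k' : ℤ)) (y + k)) * pt (y + k) / D)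
          = T x := by
      filter_upwards [hTfin] with x hx
      have hSk : ∀ k : ℤ,
          (∑' k' : ℤ, ENNReal.ofReal (psit (x + (k' : ℤ)) (y + k))) ≠ ∞ := by
        intro k
        intro hcon
        have hle : (∑' k' : ℤ, ENNReal.ofReal (psit (x + (k' : ℤ)) (y + k)))
            * ENNReal.ofReal (pt (y + k) / D) ≤ T x := ENNReal.le_tsum k
        have hc : ENNReal.ofReal (pt (y + k) / D) ≠ 0 := by
          simp [ENNReal.ofReal_eq_zero, not_le, div_pos (hpt _) hD]
        rw [hcon, ENNReal.top_mul hc] at hle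
        exact absurd (top_le_iff.mp hle) hx.ne
      have hSsum : ∀ k : ℤ, Summable fun k' : ℤ => psit (x + (k' : ℤ)) (y + k) := by
        intro k
        have := ENNReal.summable_toReal (hSk k)
        simpa [ENNReal.toReal_ofReal (hpsit _ _).le] using this
      have hofSk : ∀ k : ℤ,
          ENNReal.ofReal (∑' k' : ℤ, psit (x + (k' : ℤ)) (y + k))
            = ∑' k' : ℤ, ENNReal.ofReal (psit (x + (k' : ℤ)) (y + k)) := fun k =>
        ENNReal.ofReal_tsum_of_nonneg (fun k' => (hpsit _ _).le) (hSsum k)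
      have hterm : ∀ k : ℤ,
          ENNReal.ofReal ((∑' k' : ℤ, psit (x + (k' : ℤ)) (y + k)) * pt (y + k) / D)
            = (∑' k' : ℤ, ENNReal.ofReal (psit (x + (k' : ℤ)) (y + k)))
                * ENNReal.ofReal (pt (y + k) / D) := by
        intro k
        rw [mul_div_assoc, ENNReal.ofReal_mul (tsum_nonneg fun k' => (hpsit _ _).le), hofSk k]
      have houter : Summable fun k : ℤ =>
          (∑' k' : ℤ, psit (x + (k' : ℤ)) (y + k)) * pt (y + k) / D := by
        have h1 := ENNReal.summable_toReal hx.ne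
        have h2 : ∀ k : ℤ,
            (((∑' k' : ℤ, ENNReal.ofReal (psit (x + (k' : ℤ)) (y + k)))
              * ENNReal.ofReal (pt (y + k) / D)).toReal)
              = (∑' k' : ℤ, psit (x + (k' : ℤ)) (y + k)) * pt (y + k) / D := by
          intro k
          rw [← hterm k, ENNReal.toReal_ofReal]
          exact div_nonneg (mul_nonneg (tsum_nonneg fun k' => (hpsit _ _).le) (hpt _).le) hD.le
        exact h1.congr h2
      rw [ENNReal.ofReal_tsum_of_nonneg
        (fun k => div_nonneg (mul_nonneg (tsum_nonneg fun k' => (hpsit _ _).le) (hpt _).le) hD.le)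
        houter]
      exact tsum_congr hterm
    -- measurability of the real integrand
    have hFnn : ∀ x : ℝ, 0 ≤ ∑' k : ℤ, (∑' k' : ℤ, psit (x + (k' : ℤ)) (y + k)) * pt (y + k) / D :=
      fun x => tsum_nonneg fun k =>
        div_nonneg (mul_nonneg (tsum_nonneg fun k' => (hpsit _ _).le) (hpt _).le) hD.le
    have hFmeas : AEStronglyMeasurable
        (fun x => ∑' k : ℤ, (∑' k' : ℤ, psit (x + (k' : ℤ)) (y + k)) * pt (y + k) / D)
        (volume.restrict (Set.Ico (0 : ℝ) 1)) := by
      refine (hTmeas.ennreal_toReal.aestronglyMeasurable).congr ?_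
      filter_upwards [hae] with x hx
      rw [← hx, ENNReal.toReal_ofReal (hFnn x)]
    rw [integral_eq_lintegral_of_nonneg_ae (ae_of_all _ fun x => hFnn x) hFmeas,
      lintegral_congr_ae hae, L2, ENNReal.toReal_one]
end

section
/- Let p be a probability density on ℝ with p(x) > 0 for all x, and for y ∈ [0,1) define the discrete distribution π(k) = p(y+k) / Σ_{k'∈ℤ} p(y+k') on ℤ (assuming the sum converges). If K ~ π and, given K = k, Y is sampled from a conditional density q(· | y + k) on ℝ, then X = Y mod 1 has density x ↦ Σ_{k∈ℤ} Σ_{k'∈ℤ} q(x + k' | y + k) π(k) on [0,1). -/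
open MeasureTheory ProbabilityTheory
open scoped ENNReal

lemma floor_eq_of_sub_mem (x : ℝ) (k : ℤ) (h : x - k ∈ Set.Ico (0:ℝ) 1) : ⌊x⌋ = k := by
  rw [Set.mem_Ico] at h
  rw [Int.floor_eq_iff]
  constructor
  · linarith [h.1]
  · linarith [h.2]

lemma fract_preimage_eq (t : Set ℝ) (ht : t ⊆ Set.Ico 0 1) :
    Int.fract ⁻¹' t = ⋃ k : ℤ, (fun x : ℝ => x - k) ⁻¹' t := by
  ext x
  simp only [Set.mem_preimage, Set.mem_iUnion]
  constructor
  · intro hx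
    refine ⟨⌊x⌋, ?_⟩
    rwa [← Int.self_sub_floor] at hx
  · rintro ⟨k, hk⟩
    have hfl : ⌊x⌋ = k := floor_eq_of_sub_mem x k (ht hk)
    rw [← Int.self_sub_floor, hfl]
    exact hk

lemma map_fract_withDensity (f : ℝ → ℝ≥0∞) (hf : Measurable f) :
    (volume.withDensity f).map Int.fract
      = (volume.restrict (Set.Ico (0:ℝ) 1)).withDensity (fun x => ∑' k : ℤ, f (x + k)) := by
  ext s hs
  set t := s ∩ Set.Ico (0:ℝ) 1 with htdef
  have htmeas : MeasurableSet t := hs.inter measurableSet_Ico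
  have htsub : t ⊆ Set.Ico 0 1 := Set.inter_subset_right
  have hpre : Int.fract ⁻¹' s = Int.fract ⁻¹' t := by
    ext x
    simp only [htdef, Set.mem_preimage, Set.mem_inter_iff, Set.mem_Ico, iff_self_and]
    exact fun _ => ⟨Int.fract_nonneg x, Int.fract_lt_one x⟩
  have hAmeas : ∀ k : ℤ, MeasurableSet ((fun x : ℝ => x - (k:ℝ)) ⁻¹' t) :=
    fun k => (measurable_sub_const _) htmeas
  have hdisj : Pairwise (Function.onFun Disjoint fun k : ℤ => (fun x : ℝ => x - (k:ℝ)) ⁻¹' t) := by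
    intro i j hij
    refine Set.disjoint_left.mpr fun x h1 h2 => hij ?_
    rw [← floor_eq_of_sub_mem x i (htsub h1), ← floor_eq_of_sub_mem x j (htsub h2)]
  have hshift : ∀ k : ℤ, ∫⁻ x in (fun x : ℝ => x - (k:ℝ)) ⁻¹' t, f x
      = ∫⁻ x in t, f (x + k) := by
    intro k
    have := (measurePreserving_sub_right volume (k:ℝ)).setLIntegral_comp_preimage htmeas
      (hf.comp (measurable_add_const (k:ℝ))) (f := fun z => f (z + k))
    simpa [sub_add_cancel] using this
  rw [Measure.map_apply measurable_fract hs, hpre, fract_preimage_eq t htsub,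
    withDensity_apply _ (MeasurableSet.iUnion hAmeas), lintegral_iUnion hAmeas hdisj,
    withDensity_apply _ hs, Measure.restrict_restrict hs, ← htdef]
  simp_rw [hshift]
  exact (lintegral_tsum fun k : ℤ =>
    ((hf.comp (measurable_add_const (k:ℝ))).aemeasurable : AEMeasurable (fun x => f (x + k)) _)).symm

/-- Flat-torus backward sampling: let `π(k) ∝ p(y+k)` be the latent wrapping distribution and,
given `K = k`, sample `Y` from the density `q(· | y + k)`; then `X = Y mod 1` has density
`x ↦ Σ_k Σ_{k'} q(x + k' | y + k) π(k)` on `[0,1)`. Here `q z c` denotes `q(z | c)`. -/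
theorem stmt19 {Ω : Type*} [MeasurableSpace Ω]
    (μ : Measure Ω) [IsProbabilityMeasure μ]
    (p : ℝ → ℝ) (hp : ∀ x, 0 < p x) (hpint : Integrable p)
    (y : ℝ) (hy : y ∈ Set.Ico (0 : ℝ) 1)
    (hsum : Summable fun k : ℤ => p (y + k))
    (q : ℝ → ℝ → ℝ)
    (hq : ∀ c z, 0 ≤ q z c) (hqmeas : ∀ c, Measurable fun z => q z c)
    (hqprob : ∀ c, ∫ z, q z c = 1)
    (π : ℤ → ℝ) (hπ : ∀ k : ℤ, π k = p (y + k) / ∑' k' : ℤ, p (y + k'))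
    (K : Ω → ℤ) (hK : Measurable K)
    (Y : Ω → ℝ) (hY : Measurable Y)
    (hKlaw : ∀ k : ℤ, μ {ω | K ω = k} = ENNReal.ofReal (π k))
    (hcond : ∀ k : ℤ, μ {ω | K ω = k} ≠ 0 →
      (μ[|{ω | K ω = k}]).map Y
        = volume.withDensity fun z => ENNReal.ofReal (q z (y + k))) :
    μ.map (fun ω => Int.fract (Y ω))
      = (volume.restrict (Set.Ico (0 : ℝ) 1)).withDensity
          (fun x => ENNReal.ofReal (∑' k : ℤ, (∑' k' : ℤ, q (x + k') (y + k)) * π k)) := by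
  -- positivity of π
  have hS : 0 < ∑' k' : ℤ, p (y + k') := Summable.tsum_pos hsum (fun k => (hp _).le) 0 (hp _)
  have hπpos : ∀ k, 0 < π k := fun k => by rw [hπ k]; exact div_pos (hp _) hS
  set A : ℤ → Set Ω := fun k => {ω | K ω = k} with hA
  have hAmeas : ∀ k, MeasurableSet (A k) := fun k => hK (measurableSet_singleton k)
  have hAne : ∀ k, μ (A k) ≠ 0 := fun k => by
    rw [hKlaw k]; simp [ENNReal.ofReal_eq_zero, not_le, hπpos k]
  have hrestrict : ∀ k, μ.restrict (A k) = μ (A k) • (μ[|A k]) := by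
    intro k
    rw [ProbabilityTheory.cond, smul_smul,
      ENNReal.mul_inv_cancel (hAne k) (measure_ne_top μ _), one_smul]
  have hμsum : μ = Measure.sum (fun k : ℤ => μ.restrict (A k)) := by
    ext s hs
    rw [Measure.sum_apply _ hs]
    simp_rw [Measure.restrict_apply hs]
    have hU : ⋃ k : ℤ, s ∩ A k = s := by
      rw [← Set.inter_iUnion]
      have : (⋃ k : ℤ, A k) = Set.univ := by ext ω; simp [hA]
      simp [this]
    rw [← measure_iUnion ?_ (fun k => hs.inter (hAmeas k)), hU]
    intro i j hij
    refine Set.disjoint_left.mpr fun ω h1 h2 => hij ?_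
    have := h1.2; have := h2.2
    simp only [hA, Set.mem_setOf_eq] at *
    rw [← h1.2, ← h2.2]
  -- the per-k densities
  set g : ℤ → ℝ → ℝ≥0∞ := fun k x => ∑' k' : ℤ, ENNReal.ofReal (q (x + k') (y + k)) with hg
  have hgmeas : ∀ k, Measurable (g k) := fun k =>
    Measurable.ennreal_tsum fun k' =>
      ((hqmeas (y + k)).comp (measurable_add_const (k' : ℝ))).ennreal_ofReal
  have hmapk : ∀ k : ℤ, (μ.restrict (A k)).map (fun ω => Int.fract (Y ω))
      = (volume.restrict (Set.Ico (0:ℝ) 1)).withDensity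
          (fun x => ENNReal.ofReal (π k) * g k x) := by
    intro k
    have hmm : (μ.restrict (A k)).map (fun ω => Int.fract (Y ω))
        = ((μ.restrict (A k)).map Y).map Int.fract := by
      rw [Measure.map_map measurable_fract hY]; rfl
    rw [hmm, hrestrict k, Measure.map_smul, hcond k (hAne k), Measure.map_smul,
      map_fract_withDensity _ (hqmeas (y + k)).ennreal_ofReal, hKlaw k,
      ← withDensity_smul _ (hgmeas k)]
    rfl
  set G : ℝ → ℝ≥0∞ := fun x => ∑' k : ℤ, ENNReal.ofReal (π k) * g k x with hG
  have hGmeas : Measurable G := Measurable.ennreal_tsum fun k =>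
    (hgmeas k).const_mul _
  have hmain : μ.map (fun ω => Int.fract (Y ω))
      = (volume.restrict (Set.Ico (0:ℝ) 1)).withDensity G := by
    conv_lhs => rw [hμsum]
    rw [Measure.map_sum (f := fun ω => Int.fract (Y ω)) (measurable_fract.comp hY).aemeasurable]
    simp_rw [hmapk]
    rw [← withDensity_tsum fun k => (hgmeas k).const_mul _]
    congr 1
    ext x
    rw [ENNReal.tsum_apply]
  rw [hmain]
  -- a.e. identification of the densities
  have hfin : ∀ᵐ x ∂(volume.restrict (Set.Ico (0:ℝ) 1)), G x < ∞ := by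
    refine ae_lt_top hGmeas ?_
    have : ((volume.restrict (Set.Ico (0:ℝ) 1)).withDensity G) Set.univ = 1 := by
      rw [← hmain, Measure.map_apply (f := fun ω => Int.fract (Y ω)) (measurable_fract.comp hY) MeasurableSet.univ]
      simp
    rw [withDensity_apply _ MeasurableSet.univ, Measure.restrict_univ] at this
    simp [this]
  refine withDensity_congr_ae ?_
  filter_upwards [hfin] with x hx
  -- from finiteness, get summability and identify
  have hterm : ∀ k : ℤ, ENNReal.ofReal (π k) * g k x < ∞ := fun k =>
    lt_of_le_of_lt (ENNReal.le_tsum k) hx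
  have hgfin : ∀ k, g k x ≠ ∞ := by
    intro k
    intro h
    have := hterm k
    rw [h, ENNReal.mul_top (by simp [ENNReal.ofReal_eq_zero, not_le, hπpos k])] at this
    exact (lt_irrefl _ this).elim
  have hinner : ∀ k : ℤ, Summable (fun k' : ℤ => q (x + k') (y + k)) := by
    intro k
    have := ENNReal.summable_toReal (hgfin k)
    simpa [ENNReal.toReal_ofReal (hq (y + _) _)] using this
  have hinner_eq : ∀ k : ℤ, ENNReal.ofReal (∑' k' : ℤ, q (x + k') (y + k)) = g k x := fun k =>
    ENNReal.ofReal_tsum_of_nonneg (fun k' => hq _ _) (hinner k)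
  have houter_eq : ∀ k : ℤ, ENNReal.ofReal ((∑' k' : ℤ, q (x + k') (y + k)) * π k)
      = ENNReal.ofReal (π k) * g k x := by
    intro k
    rw [ENNReal.ofReal_mul (tsum_nonneg fun k' => hq _ _), hinner_eq, mul_comm]
  have houter : Summable (fun k : ℤ => (∑' k' : ℤ, q (x + k') (y + k)) * π k) := by
    have hne : (∑' k : ℤ, ENNReal.ofReal ((∑' k' : ℤ, q (x + k') (y + k)) * π k)) ≠ ∞ := by
      simp_rw [houter_eq]; exact hx.ne
    have := ENNReal.summable_toReal hne
    simpa [ENNReal.toReal_ofReal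
      (mul_nonneg (tsum_nonneg fun k' => hq _ _) (hπpos _).le)] using this
  rw [ENNReal.ofReal_tsum_of_nonneg
    (fun k => mul_nonneg (tsum_nonneg fun k' => hq _ _) (hπpos _).le) houter]
  exact tsum_congr fun k => (houter_eq k).symm
end
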